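/- arXiv:1912.00285 — 5 statements merged into one kernel-verified Lean document; each statement's English description precedes it below -/
import Mathlib

section
/- Let {η_{j,n} : 1 ≤ j ≤ k, n ≥ 1} be i.i.d. standard normal random variables and let v ∈ ℝ^k with ‖v‖_2 ≤ 1. Then with ε_n = (log n)^{-1/k}, P( v_j √2 (log n)^{1/2} − ε_n ≤ η_{j,n} ≤ v_j √2 (log n)^{1/2} + ε_n for all 1 ≤ j ≤ k ) ≥ 1/((8π)^{k/2} n log n) for all n sufficiently large. -/
open MeasureTheory ProbabilityTheory Real Filter

open intervalIntegral in

lemma key_int (a ε : ℝ) (hε : 0 ≤ ε) :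
    2 * ε * Real.exp (-(a^2 + ε^2)/2) ≤ ∫ x in (a - ε)..(a + ε), Real.exp (-x^2/2) := by
  have hg : ∀ b : ℝ, Continuous fun t : ℝ => Real.exp (-(b + t)^2/2) := by
    intro b; fun_prop
  have hg' : Continuous fun t : ℝ => Real.exp (-(a + -t)^2/2) := by fun_prop
  have h1 : (∫ x in (a - ε)..(a + ε), Real.exp (-x^2/2))
      = ∫ t in (-ε)..ε, Real.exp (-(a + t)^2/2) := by
    rw [intervalIntegral.integral_comp_add_left (fun x => Real.exp (-x^2/2)) a]
    rw [show a + -ε = a - ε by ring]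
  have h2 : (∫ t in (-ε)..ε, Real.exp (-(a + t)^2/2))
      = (∫ t in (-ε)..(0:ℝ), Real.exp (-(a + t)^2/2))
        + ∫ t in (0:ℝ)..ε, Real.exp (-(a + t)^2/2) :=
    (intervalIntegral.integral_add_adjacent_intervals
        ((hg a).intervalIntegrable _ _) ((hg a).intervalIntegrable _ _)).symm
  have h3 : (∫ t in (-ε)..(0:ℝ), Real.exp (-(a + t)^2/2))
      = ∫ t in (0:ℝ)..ε, Real.exp (-(a + -t)^2/2) := by
    rw [intervalIntegral.integral_comp_neg (fun t => Real.exp (-(a + t)^2/2))]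
    norm_num
  have key : ∀ t ∈ Set.Icc (0:ℝ) ε,
      2 * Real.exp (-(a^2 + ε^2)/2)
        ≤ Real.exp (-(a + -t)^2/2) + Real.exp (-(a + t)^2/2) := by
    intro t ht
    have e1 : Real.exp (-(a + t)^2/2) = Real.exp (-(a^2+t^2)/2) * Real.exp (-(a*t)) := by
      rw [← Real.exp_add]; ring_nf
    have e2 : Real.exp (-(a + -t)^2/2) = Real.exp (-(a^2+t^2)/2) * Real.exp (a*t) := by
      rw [← Real.exp_add]; ring_nf
    have h4 : (2:ℝ) ≤ Real.exp (-(a*t)) + Real.exp (a*t) := by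
      nlinarith [Real.add_one_le_exp (a*t), Real.add_one_le_exp (-(a*t))]
    have h5 : Real.exp (-(a^2+ε^2)/2) ≤ Real.exp (-(a^2+t^2)/2) := by
      apply Real.exp_le_exp.2; nlinarith [ht.1, ht.2]
    nlinarith [Real.exp_pos (-(a^2+t^2)/2)]
  have h6 : (∫ t in (0:ℝ)..ε, 2 * Real.exp (-(a^2 + ε^2)/2))
      ≤ ∫ t in (0:ℝ)..ε, (Real.exp (-(a + -t)^2/2) + Real.exp (-(a + t)^2/2)) := by
    apply intervalIntegral.integral_mono_on hε (intervalIntegrable_const)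
      ((hg'.add (hg a)).intervalIntegrable _ _) key
  rw [intervalIntegral.integral_const] at h6
  rw [intervalIntegral.integral_add (hg'.intervalIntegrable _ _)
      ((hg a).intervalIntegrable _ _)] at h6
  simp only [smul_eq_mul, sub_zero] at h6
  rw [h1, h2, h3]
  linarith

open ProbabilityTheory in
lemma gauss_icc_lb (a ε : ℝ) (hε : 0 ≤ ε) :
    ENNReal.ofReal ((Real.sqrt (2*π))⁻¹ * (2*ε*Real.exp (-(a^2+ε^2)/2)))
      ≤ gaussianReal 0 1 (Set.Icc (a-ε) (a+ε)) := by
  rw [gaussianReal_apply_eq_integral 0 one_ne_zero]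
  apply ENNReal.ofReal_le_ofReal
  have hpdf : ∀ x : ℝ, gaussianPDFReal 0 1 x = (Real.sqrt (2*π))⁻¹ * Real.exp (-x^2/2) := by
    intro x; simp [gaussianPDFReal]
  have hle : a - ε ≤ a + ε := by linarith
  calc (Real.sqrt (2*π))⁻¹ * (2*ε*Real.exp (-(a^2+ε^2)/2))
      ≤ (Real.sqrt (2*π))⁻¹ * ∫ x in (a-ε)..(a+ε), Real.exp (-x^2/2) := by
        apply mul_le_mul_of_nonneg_left (key_int a ε hε)
        positivity
    _ = ∫ x in Set.Icc (a-ε) (a+ε), gaussianPDFReal 0 1 x := by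
        simp only [hpdf]
        rw [MeasureTheory.integral_Icc_eq_integral_Ioc,
          ← intervalIntegral.integral_of_le hle, ← intervalIntegral.integral_const_mul]

lemma ofReal_prod_of_nonneg {ι : Type*} (s : Finset ι) (f : ι → ℝ) (h : ∀ i ∈ s, 0 ≤ f i) :
    ENNReal.ofReal (∏ i ∈ s, f i) = ∏ i ∈ s, ENNReal.ofReal (f i) := by
  induction s using Finset.cons_induction with
  | empty => simp
  | cons i s hi ih =>
    rw [Finset.prod_cons, Finset.prod_cons, ENNReal.ofReal_mul (h i (Finset.mem_cons_self i s)),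
      ih (fun j hj => h j (Finset.mem_cons_of_mem hj))]

/-- Lemma 2.6 (key estimate): for i.i.d. standard normals `η_{j,n}` and a vector `v`
in the closed unit ball of `ℝ^k`, with `ε_n = (log n)^{-1/k}`, the probability that
`η_{j,n}` lies within `ε_n` of `v_j √2 (log n)^{1/2}` for every `j` is at least
`1/((8π)^{k/2} n log n)` for all `n` sufficiently large. -/
theorem gaussian_vector_lower_bound
    {Ω : Type*} [MeasureSpace Ω] (P : Measure Ω) [IsProbabilityMeasure P]
    (k : ℕ) (η : Fin k → ℕ → Ω → ℝ)
    (hmeas : ∀ j n, Measurable (η j n))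
    (hindep : iIndepFun
      (fun p : Fin k × ℕ => η p.1 p.2) P)
    (hlaw : ∀ j n, P.map (η j n) = gaussianReal 0 1)
    (v : Fin k → ℝ) (hv : Real.sqrt (∑ j, (v j) ^ 2) ≤ 1) :
    ∀ᶠ n : ℕ in atTop,
      ENNReal.ofReal (1 / ((8 * π) ^ ((k : ℝ) / 2) * n * Real.log n))
        ≤ P {ω | ∀ j : Fin k,
            v j * Real.sqrt 2 * Real.sqrt (Real.log n) - (Real.log n) ^ (-(1 : ℝ) / k)
              ≤ η j n ω ∧
            η j n ω ≤
              v j * Real.sqrt 2 * Real.sqrt (Real.log n) + (Real.log n) ^ (-(1 : ℝ) / k)} := by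
  filter_upwards [eventually_ge_atTop 3] with n hn
  have hn3 : (3:ℝ) ≤ n := by exact_mod_cast hn
  have hn0 : (0:ℝ) < n := by linarith
  set L := Real.log n with hLdef
  have hL : 1 ≤ L := by
    rw [hLdef, Real.le_log_iff_exp_le hn0]
    calc Real.exp 1 ≤ 2.7182818286 := Real.exp_one_lt_d9.le
      _ ≤ n := by linarith
  have hL0 : (0:ℝ) < L := by linarith
  rcases Nat.eq_zero_or_pos k with hk0 | hk0
  · subst hk0
    have hset : {ω : Ω | ∀ j : Fin 0,
        v j * Real.sqrt 2 * Real.sqrt L - L ^ (-(1 : ℝ) / (0:ℕ)) ≤ η j n ω ∧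
        η j n ω ≤ v j * Real.sqrt 2 * Real.sqrt L + L ^ (-(1 : ℝ) / (0:ℕ))} = Set.univ := by
      ext ω; simp
    rw [hset, measure_univ]
    apply ENNReal.ofReal_le_one.2
    rw [Nat.cast_zero, zero_div, Real.rpow_zero, one_mul]
    rw [div_le_one (by positivity)]
    nlinarith
  have hkR : (0:ℝ) < k := by exact_mod_cast hk0
  set ε := L ^ (-(1:ℝ)/k) with hεdef
  have hεpos : 0 < ε := Real.rpow_pos_of_pos hL0 _
  have hε1 : ε ≤ 1 := Real.rpow_le_one_of_one_le_of_nonpos hL (by exact div_nonpos_of_nonpos_of_nonneg (by norm_num) (Nat.cast_nonneg k))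
  have hεk : ε ^ k = 1 / L := by
    rw [hεdef, ← Real.rpow_natCast (L ^ (-(1:ℝ)/k)) k, ← Real.rpow_mul hL0.le]
    rw [show (-(1:ℝ)/k) * k = -1 by field_simp]
    rw [Real.rpow_neg_one, one_div]
  -- step B: independence
  have hprodP : P {ω : Ω | ∀ j : Fin k,
        v j * Real.sqrt 2 * Real.sqrt L - ε ≤ η j n ω ∧
        η j n ω ≤ v j * Real.sqrt 2 * Real.sqrt L + ε}
      = ∏ j : Fin k, P ((η j n) ⁻¹' Set.Icc
          (v j * Real.sqrt 2 * Real.sqrt L - ε) (v j * Real.sqrt 2 * Real.sqrt L + ε)) := by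
    have hinj : Function.Injective (fun j : Fin k => (j, n)) := by
      intro a b h; simpa using congrArg Prod.fst h
    have hset : {ω : Ω | ∀ j : Fin k,
        v j * Real.sqrt 2 * Real.sqrt L - ε ≤ η j n ω ∧
        η j n ω ≤ v j * Real.sqrt 2 * Real.sqrt L + ε}
        = ⋂ p ∈ Finset.image (fun j : Fin k => (j, n)) Finset.univ,
            (η p.1 p.2) ⁻¹' Set.Icc
              (v p.1 * Real.sqrt 2 * Real.sqrt L - ε) (v p.1 * Real.sqrt 2 * Real.sqrt L + ε) := by
      ext ω
      simp [Set.mem_Icc]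
    rw [hset, hindep.meas_biInter (fun p _ => ⟨_, measurableSet_Icc, rfl⟩),
      Finset.prod_image (fun a _ b _ h => hinj h)]
  -- step C/D: per-coordinate lower bound
  have hfac : ∀ j : Fin k,
      ENNReal.ofReal ((Real.sqrt (2*π))⁻¹ *
          (2*ε*Real.exp (-((v j * Real.sqrt 2 * Real.sqrt L)^2+ε^2)/2)))
        ≤ P ((η j n) ⁻¹' Set.Icc
          (v j * Real.sqrt 2 * Real.sqrt L - ε) (v j * Real.sqrt 2 * Real.sqrt L + ε)) := by
    intro j
    have h := gauss_icc_lb (v j * Real.sqrt 2 * Real.sqrt L) ε hεpos.le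
    rwa [← hlaw j n, Measure.map_apply (hmeas j n) measurableSet_Icc] at h
  -- real-valued inequality
  have hv2 : ∑ j, (v j)^2 ≤ 1 := by
    have h0 : (0:ℝ) ≤ ∑ j, (v j) ^ 2 := by positivity
    nlinarith [Real.sq_sqrt h0, Real.sqrt_nonneg (∑ j, (v j)^2)]
  have hsq : ∀ j : Fin k, (v j * Real.sqrt 2 * Real.sqrt L)^2 = (v j)^2 * (2*L) := by
    intro j
    rw [mul_pow, mul_pow, Real.sq_sqrt (by norm_num : (0:ℝ) ≤ 2), Real.sq_sqrt hL0.le]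
    ring
  have hsum : ∑ j, (v j * Real.sqrt 2 * Real.sqrt L)^2 ≤ 2*L := by
    calc ∑ j, (v j * Real.sqrt 2 * Real.sqrt L)^2 = (∑ j, (v j)^2) * (2*L) := by
          rw [Finset.sum_mul]; exact Finset.sum_congr rfl fun j _ => hsq j
      _ ≤ 1 * (2*L) := by nlinarith
      _ = 2*L := one_mul _
  have hexp : Real.exp (-L) * Real.exp (-(1:ℝ)/2)^k
      ≤ Real.exp (∑ j, -(((v j * Real.sqrt 2 * Real.sqrt L)^2+ε^2)/2)) := by
    rw [← Real.exp_nat_mul, ← Real.exp_add, Real.exp_le_exp]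
    have hsum2 : ∑ j, -(((v j * Real.sqrt 2 * Real.sqrt L)^2+ε^2)/2)
        = -(∑ j, (v j * Real.sqrt 2 * Real.sqrt L)^2)/2 - k*ε^2/2 := by
      rw [Finset.sum_congr rfl (fun j _ => by ring :
        ∀ j ∈ Finset.univ, -(((v j * Real.sqrt 2 * Real.sqrt L)^2+ε^2)/2)
          = -((v j * Real.sqrt 2 * Real.sqrt L)^2)/2 + (-(ε^2)/2)),
        Finset.sum_add_distrib, Finset.sum_const, Finset.card_univ, Fintype.card_fin]
      rw [← Finset.sum_div, ← Finset.sum_neg_distrib]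
      push_cast
      ring
    rw [hsum2]
    have hε2 : ε^2 ≤ 1 := by nlinarith
    have hk2 : (k:ℝ)*ε^2 ≤ k := by
      have := mul_le_of_le_one_right (le_of_lt hkR) hε2
      linarith
    nlinarith
  have hprodc : ∏ j : Fin k, ((Real.sqrt (2*π))⁻¹ *
        (2*ε*Real.exp (-((v j * Real.sqrt 2 * Real.sqrt L)^2+ε^2)/2)))
      = ((Real.sqrt (2*π))⁻¹ * (2*ε))^k
        * Real.exp (∑ j, -(((v j * Real.sqrt 2 * Real.sqrt L)^2+ε^2)/2)) := by
    rw [Finset.prod_congr rfl (fun j _ => by ring :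
      ∀ j ∈ Finset.univ, ((Real.sqrt (2*π))⁻¹ *
        (2*ε*Real.exp (-((v j * Real.sqrt 2 * Real.sqrt L)^2+ε^2)/2)))
        = ((Real.sqrt (2*π))⁻¹ * (2*ε))
          * Real.exp (-(((v j * Real.sqrt 2 * Real.sqrt L)^2+ε^2)/2))),
      Finset.prod_mul_distrib, Finset.prod_const, Finset.card_univ, Fintype.card_fin,
      ← Real.exp_sum]
  have hsqrtpos : (0:ℝ) < Real.sqrt (2*π) := Real.sqrt_pos.2 (by positivity)
  have hCb : (1:ℝ) ≤ (Real.sqrt (2*π))⁻¹ * 2 * Real.exp (-(1:ℝ)/2) * (2 * Real.sqrt (2*π)) := by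
    have h12 : (1:ℝ)/2 ≤ Real.exp (-(1:ℝ)/2) := by
      nlinarith [Real.add_one_le_exp (-(1:ℝ)/2)]
    have : (Real.sqrt (2*π))⁻¹ * 2 * Real.exp (-(1:ℝ)/2) * (2 * Real.sqrt (2*π))
        = 4 * Real.exp (-(1:ℝ)/2) := by field_simp; ring
    rw [this]; linarith
  have h8pi : (8*π) ^ ((k:ℝ)/2) = (2 * Real.sqrt (2*π))^k := by
    rw [show ((k:ℝ)/2) = (1/2)*(k:ℝ) by ring, Real.rpow_mul (by positivity),
      Real.rpow_natCast]
    congr 1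
    rw [← Real.sqrt_eq_rpow, show (8:ℝ)*π = 4*(2*π) by ring,
      Real.sqrt_mul (by norm_num : (0:ℝ) ≤ 4),
      show (4:ℝ) = 2^2 by norm_num, Real.sqrt_sq (by norm_num : (0:ℝ) ≤ 2)]
  have hreal : 1 / ((8*π) ^ ((k:ℝ)/2) * n * L)
      ≤ ∏ j : Fin k, ((Real.sqrt (2*π))⁻¹ *
          (2*ε*Real.exp (-((v j * Real.sqrt 2 * Real.sqrt L)^2+ε^2)/2))) := by
    rw [hprodc]
    have hstep : ((Real.sqrt (2*π))⁻¹ * (2*ε))^k * (Real.exp (-L) * Real.exp (-(1:ℝ)/2)^k)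
        ≤ ((Real.sqrt (2*π))⁻¹ * (2*ε))^k
            * Real.exp (∑ j, -(((v j * Real.sqrt 2 * Real.sqrt L)^2+ε^2)/2)) := by
      apply mul_le_mul_of_nonneg_left hexp (by positivity)
    refine le_trans ?_ hstep
    have heL : Real.exp (-L) = 1/n := by
      rw [Real.exp_neg, hLdef, Real.exp_log hn0, one_div]
    have hexpand : ((Real.sqrt (2*π))⁻¹ * (2*ε))^k * (Real.exp (-L) * Real.exp (-(1:ℝ)/2)^k)
        = ((Real.sqrt (2*π))⁻¹ * 2 * Real.exp (-(1:ℝ)/2))^k * (ε^k) * (1/n) := by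
      rw [heL, mul_pow, mul_pow, mul_pow]
      ring
    rw [hexpand, hεk, h8pi]
    rw [div_le_iff₀ (by positivity)]
    have : ((Real.sqrt (2*π))⁻¹ * 2 * Real.exp (-(1:ℝ)/2))^k * (1/L) * (1/n)
        * ((2 * Real.sqrt (2*π))^k * n * L)
        = ((Real.sqrt (2*π))⁻¹ * 2 * Real.exp (-(1:ℝ)/2) * (2 * Real.sqrt (2*π)))^k := by
      rw [mul_pow ((Real.sqrt (2*π))⁻¹ * 2 * Real.exp (-(1:ℝ)/2)) (2 * Real.sqrt (2*π))]
      field_simp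
    rw [this]
    exact one_le_pow₀ hCb
  -- combine
  calc ENNReal.ofReal (1 / ((8*π) ^ ((k:ℝ)/2) * n * L))
      ≤ ENNReal.ofReal (∏ j : Fin k, ((Real.sqrt (2*π))⁻¹ *
          (2*ε*Real.exp (-((v j * Real.sqrt 2 * Real.sqrt L)^2+ε^2)/2)))) :=
        ENNReal.ofReal_le_ofReal hreal
    _ = ∏ j : Fin k, ENNReal.ofReal ((Real.sqrt (2*π))⁻¹ *
          (2*ε*Real.exp (-((v j * Real.sqrt 2 * Real.sqrt L)^2+ε^2)/2))) :=
        ofReal_prod_of_nonneg _ _ (fun j _ => by positivity)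
    _ ≤ ∏ j : Fin k, P ((η j n) ⁻¹' Set.Icc
          (v j * Real.sqrt 2 * Real.sqrt L - ε) (v j * Real.sqrt 2 * Real.sqrt L + ε)) :=
        Finset.prod_le_prod' (fun j _ => hfac j)
    _ = _ := hprodP.symm
end

section
/- Let {η_{j,n} : 1 ≤ j ≤ k, n ≥ 1} be i.i.d. standard normal random variables and v ∈ ℝ^k with ‖v‖_2 ≤ 1. Then almost surely there is a subsequence n_m → ∞ along which η_{j,n_m}/(2 log n_m)^{1/2} → v_j for every 1 ≤ j ≤ k. -/
open MeasureTheory ProbabilityTheory Real Filter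

lemma gauss_Icc_lower (a b M : ℝ) (hab : a ≤ b) (hM : ∀ x ∈ Set.Icc a b, |x| ≤ M) :
    ENNReal.ofReal (((Real.sqrt (2 * π))⁻¹ * Real.exp (-(M ^ 2) / 2)) * (b - a))
      ≤ gaussianReal 0 1 (Set.Icc a b) := by
  rw [gaussianReal_apply 0 one_ne_zero]
  have hle : ∀ x ∈ Set.Icc a b,
      ENNReal.ofReal ((Real.sqrt (2 * π))⁻¹ * Real.exp (-(M ^ 2) / 2)) ≤ gaussianPDF 0 1 x := by
    intro x hx
    unfold gaussianPDF gaussianPDFReal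
    apply ENNReal.ofReal_le_ofReal
    push_cast
    simp only [mul_one, sub_zero]
    have := hM x hx
    have h2 : x ^ 2 ≤ M ^ 2 := by
      have := abs_nonneg x
      nlinarith [sq_abs x]
    have : Real.exp (-M ^ 2 / 2) ≤ Real.exp (-x ^ 2 / 2) := Real.exp_le_exp.2 (by linarith)
    have hpos : (0:ℝ) ≤ (Real.sqrt (2 * π))⁻¹ := by positivity
    calc (Real.sqrt (2 * π))⁻¹ * Real.exp (-M ^ 2 / 2)
        ≤ (Real.sqrt (2 * π))⁻¹ * Real.exp (-x ^ 2 / 2) := by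
          exact mul_le_mul_of_nonneg_left this hpos
      _ = (Real.sqrt (2 * π))⁻¹ * Real.exp (-x ^ 2 / 2) := rfl
  calc ENNReal.ofReal (((Real.sqrt (2 * π))⁻¹ * Real.exp (-(M ^ 2) / 2)) * (b - a))
      = ENNReal.ofReal ((Real.sqrt (2 * π))⁻¹ * Real.exp (-(M ^ 2) / 2)) * volume (Set.Icc a b) := by
        rw [Real.volume_Icc, ENNReal.ofReal_mul (by positivity)]
    _ = ∫⁻ _ in Set.Icc a b, ENNReal.ofReal ((Real.sqrt (2 * π))⁻¹ * Real.exp (-(M ^ 2) / 2)) := by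
        rw [setLIntegral_const]
    _ ≤ ∫⁻ x in Set.Icc a b, gaussianPDF 0 1 x :=
        setLIntegral_mono (measurable_gaussianPDF 0 1) hle


lemma gauss_band (e d w : ℝ) (n : ℕ) (hn : 2 ≤ n) (he : 0 < e) (he1 : e ≤ 1)
    (hd : 0 < d) (hw : |w| ≤ 1) :
    ENNReal.ofReal ((2 * d * (Real.sqrt (2 * π))⁻¹)
        * Real.exp (-(((1 - e) * |w| + d) ^ 2) * Real.log n))
      ≤ gaussianReal 0 1 (Set.Icc (((1 - e) * w - d) * Real.sqrt (2 * Real.log n))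
          (((1 - e) * w + d) * Real.sqrt (2 * Real.log n))) := by
  have hn2 : (2:ℝ) ≤ (n:ℝ) := by exact_mod_cast hn
  have hlog : (1:ℝ)/2 ≤ Real.log n := by
    have hl : Real.log 2 ≤ Real.log n := Real.log_le_log (by norm_num) hn2
    nlinarith [Real.log_two_gt_d9]
  set R := Real.sqrt (2 * Real.log n) with hR
  set c := (1 - e) * w with hc
  set B := (1 - e) * |w| + d with hB
  have hR1 : 1 ≤ R := by rw [hR, Real.one_le_sqrt]; linarith
  have hR0 : (0:ℝ) < R := lt_of_lt_of_le one_pos hR1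
  have hcB1 : -B ≤ c - d := by
    have : (0:ℝ) ≤ (1 - e) * (w + |w|) :=
      mul_nonneg (by linarith) (by linarith [neg_abs_le w])
    rw [hB, hc]; nlinarith
  have hcB2 : c + d ≤ B := by
    have : (0:ℝ) ≤ (1 - e) * (|w| - w) :=
      mul_nonneg (by linarith) (by linarith [le_abs_self w])
    rw [hB, hc]; nlinarith
  have hB0 : 0 ≤ B := by
    have := abs_nonneg w
    rw [hB]; nlinarith
  have hab : (c - d) * R ≤ (c + d) * R :=
    mul_le_mul_of_nonneg_right (by linarith) hR0.le
  refine le_trans ?_ (gauss_Icc_lower _ _ (B * R) hab ?_)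
  · apply ENNReal.ofReal_le_ofReal
    have hR2 : R ^ 2 = 2 * Real.log n := Real.sq_sqrt (by linarith)
    have hexp : Real.exp (-((B * R) ^ 2) / 2) = Real.exp (-(B ^ 2) * Real.log n) := by
      congr 1
      rw [mul_pow, hR2]; ring
    have hba : (c + d) * R - (c - d) * R = 2 * d * R := by ring
    rw [hba, hexp]
    have hsq : (0:ℝ) < Real.sqrt (2 * π) := Real.sqrt_pos.2 (by positivity)
    have hE : (0:ℝ) < (Real.sqrt (2 * π))⁻¹ * Real.exp (-(B ^ 2) * Real.log n) := by positivity
    calc 2 * d * (Real.sqrt (2 * π))⁻¹ * Real.exp (-(B ^ 2) * Real.log n)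
        = ((Real.sqrt (2 * π))⁻¹ * Real.exp (-(B ^ 2) * Real.log n)) * (2 * d) := by ring
      _ ≤ ((Real.sqrt (2 * π))⁻¹ * Real.exp (-(B ^ 2) * Real.log n)) * (2 * d * R) := by
          apply mul_le_mul_of_nonneg_left _ hE.le
          nlinarith
  · intro x hx
    obtain ⟨hx1, hx2⟩ := hx
    rw [abs_le]
    constructor
    · have := mul_le_mul_of_nonneg_right hcB1 hR0.le
      nlinarith
    · have := mul_le_mul_of_nonneg_right hcB2 hR0.le
      nlinarith

set_option maxHeartbeats 1000000 in
/-- Lemma 2.6: for i.i.d. standard normals `η_{j,n}` and `v` in the closed unit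
ball of `ℝ^k`, almost surely there is a subsequence `n_m → ∞` along which
`η_{j,n_m}/(2 log n_m)^{1/2} → v_j` for every `j`. -/
theorem gaussian_subsequence_limit
    {Ω : Type*} [MeasureSpace Ω] (P : Measure Ω) [IsProbabilityMeasure P]
    (k : ℕ) (η : Fin k → ℕ → Ω → ℝ)
    (hmeas : ∀ j n, Measurable (η j n))
    (hindep : iIndepFun
      (fun p : Fin k × ℕ => η p.1 p.2) P)
    (hlaw : ∀ j n, P.map (η j n) = gaussianReal 0 1)
    (v : Fin k → ℝ) (hv : Real.sqrt (∑ j, (v j) ^ 2) ≤ 1) :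
    ∀ᵐ ω ∂P, ∃ s : ℕ → ℕ, StrictMono s ∧
      ∀ j : Fin k,
        Tendsto (fun m => η j (s m) ω / Real.sqrt (2 * Real.log (s m))) atTop
          (nhds (v j)) := by
  classical
  set ε : ℕ → ℝ := fun m => 1 / (m + 4) with hεdef
  set δ : ℕ → ℝ := fun m => ε m / (2 * k + 2) with hδdef
  have hεpos : ∀ m, 0 < ε m := fun m => by positivity
  have hεle : ∀ m, ε m ≤ 1 / 4 := fun m => by
    rw [hεdef]
    rw [div_le_div_iff₀ (by positivity) (by norm_num)]
    push_cast; linarith [Nat.cast_nonneg (α := ℝ) m]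
  have hδpos : ∀ m, 0 < δ m := fun m => by
    have := hεpos m; positivity
  have hδle : ∀ m, δ m ≤ ε m / 2 := fun m => by
    rw [hδdef]
    apply div_le_div_of_nonneg_left (hεpos m).le (by norm_num)
    push_cast; linarith [Nat.cast_nonneg (α := ℝ) k]
  have hδeq : ∀ m, δ m * (2 * k + 2) = ε m := fun m => by
    rw [hδdef]; field_simp
  have hS0 : (0:ℝ) ≤ ∑ j, (v j) ^ 2 := Finset.sum_nonneg fun j _ => sq_nonneg _
  have hS : ∑ j, (v j) ^ 2 ≤ 1 := by
    nlinarith [Real.sq_sqrt hS0, Real.sqrt_nonneg (∑ j, (v j) ^ 2)]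
  have hvj : ∀ j, |v j| ≤ 1 := fun j => by
    have h1 : (v j) ^ 2 ≤ ∑ i, (v i) ^ 2 :=
      Finset.single_le_sum (fun i _ => sq_nonneg (v i)) (Finset.mem_univ j)
    nlinarith [sq_abs (v j), abs_nonneg (v j)]
  set I : ℕ → Fin k → ℕ → Set ℝ := fun m j n =>
    Set.Icc (((1 - ε m) * v j - δ m) * Real.sqrt (2 * Real.log n))
            (((1 - ε m) * v j + δ m) * Real.sqrt (2 * Real.log n)) with hIdef
  set A : ℕ → ℕ → Set Ω := fun m n => ⋂ j, η j n ⁻¹' I m j n with hAdef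
  have hAmeas : ∀ m n, MeasurableSet (A m n) := fun m n =>
    MeasurableSet.iInter fun j => (hmeas j n) measurableSet_Icc
  -- single coordinate event probability = gaussian measure
  have hmap : ∀ (j : Fin k) (n : ℕ) (m : ℕ),
      P (η j n ⁻¹' I m j n) = gaussianReal 0 1 (I m j n) := by
    intro j n m
    rw [← hlaw j n, Measure.map_apply (hmeas j n) measurableSet_Icc]
  -- product structure
  have hAn : ∀ m n, P (A m n) = ∏ j, P (η j n ⁻¹' I m j n) := by
    intro m n
    have := hindep.measure_inter_preimage_eq_mul
      ((Finset.univ : Finset (Fin k)) ×ˢ ({n} : Finset ℕ))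
      (sets := fun p => I m p.1 p.2) (fun p _ => measurableSet_Icc)
    have hset : (⋂ p ∈ (Finset.univ : Finset (Fin k)) ×ˢ ({n} : Finset ℕ),
        (fun p : Fin k × ℕ => η p.1 p.2) p ⁻¹' I m p.1 p.2) = A m n := by
      ext ω
      simp only [Set.mem_iInter, Finset.mem_product, Finset.mem_univ, Finset.mem_singleton,
        hAdef, Set.mem_preimage, true_and]
      constructor
      · intro h j; exact h (j, n) rfl
      · rintro h ⟨j, n'⟩ rfl; exact h j
    rw [hset] at this
    rw [this, Finset.prod_product]
    simp
  have hprod : ∀ m (S : Finset ℕ), P (⋂ n ∈ S, A m n) = ∏ n ∈ S, P (A m n) := by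
    intro m S
    have := hindep.measure_inter_preimage_eq_mul
      ((Finset.univ : Finset (Fin k)) ×ˢ S)
      (sets := fun p => I m p.1 p.2) (fun p _ => measurableSet_Icc)
    have hset : (⋂ p ∈ (Finset.univ : Finset (Fin k)) ×ˢ S,
        (fun p : Fin k × ℕ => η p.1 p.2) p ⁻¹' I m p.1 p.2) = ⋂ n ∈ S, A m n := by
      ext ω
      simp only [Set.mem_iInter, Finset.mem_product, Finset.mem_univ, true_and,
        hAdef, Set.mem_preimage]
      constructor
      · intro h n hn j; exact h (j, n) hn
      · rintro h ⟨j, n⟩ hn; exact h n hn j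
    rw [hset] at this
    rw [this, Finset.prod_product, Finset.prod_comm]
    exact Finset.prod_congr rfl fun n _ => (hAn m n).symm
  have hIndep : ∀ m, iIndepSet (fun n => A m n) P := fun m =>
    (iIndepSet_iff_meas_biInter (hAmeas m)).2 (hprod m)
  -- exponent
  set θ : ℕ → ℝ := fun m => ∑ j, ((1 - ε m) * |v j| + δ m) ^ 2 with hθdef
  have hθ0 : ∀ m, 0 ≤ θ m := fun m => Finset.sum_nonneg fun j _ => sq_nonneg _
  have hθlt : ∀ m, θ m < 1 := by
    intro m
    have he := hεpos m; have he4 := hεle m; have hd := hδpos m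
    have hd2 := hδle m; have hde := hδeq m
    have hterm : ∀ j : Fin k, ((1 - ε m) * |v j| + δ m) ^ 2
        ≤ (1 - ε m) ^ 2 * (v j) ^ 2 + (2 * δ m * (1 - ε m) + δ m ^ 2) := by
      intro j
      have h1 := hvj j
      have h0 := abs_nonneg (v j)
      have hkey : (1 - ε m) * |v j| * δ m ≤ (1 - ε m) * δ m := by
        apply mul_le_mul_of_nonneg_right _ hd.le
        nlinarith
      nlinarith [sq_abs (v j)]
    have hsum : θ m ≤ (1 - ε m) ^ 2 * (∑ j, (v j) ^ 2)
        + k * (2 * δ m * (1 - ε m) + δ m ^ 2) := by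
      rw [hθdef]
      calc ∑ j, ((1 - ε m) * |v j| + δ m) ^ 2
          ≤ ∑ j : Fin k, ((1 - ε m) ^ 2 * (v j) ^ 2 + (2 * δ m * (1 - ε m) + δ m ^ 2)) :=
            Finset.sum_le_sum fun j _ => hterm j
        _ = (1 - ε m) ^ 2 * (∑ j, (v j) ^ 2) + k * (2 * δ m * (1 - ε m) + δ m ^ 2) := by
            rw [Finset.sum_add_distrib, ← Finset.mul_sum, Finset.sum_const]
            simp only [Finset.card_univ, Fintype.card_fin, nsmul_eq_mul]
    have hk0 : (0:ℝ) ≤ (k:ℝ) := Nat.cast_nonneg k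
    -- from hde : δ m * (2k+2) = ε m, get k * δ m = ε m / 2 - δ m
    have hkd : (k:ℝ) * δ m = ε m / 2 - δ m := by linarith
    nlinarith [mul_le_mul_of_nonneg_left hS (sq_nonneg (1 - ε m)),
      mul_pos hd hd, mul_le_mul_of_nonneg_right hd2 hd.le]
  -- lower bound on single probability
  have hsingle : ∀ m (n : ℕ), 2 ≤ n → ∀ j,
      ENNReal.ofReal ((2 * δ m * (Real.sqrt (2 * π))⁻¹)
          * Real.exp (-(((1 - ε m) * |v j| + δ m) ^ 2) * Real.log n))
        ≤ P (η j n ⁻¹' I m j n) := by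
    intro m n hn j
    rw [hmap j n m]
    simp only [hIdef]
    exact gauss_band (ε m) (δ m) (v j) n hn (hεpos m) (by linarith [hεle m]) (hδpos m) (hvj j)
  -- lower bound on A
  have hAlow : ∀ m (n : ℕ), 2 ≤ n →
      ENNReal.ofReal ((2 * δ m * (Real.sqrt (2 * π))⁻¹) ^ k
          * Real.exp (-(θ m) * Real.log n)) ≤ P (A m n) := by
    intro m n hn
    have hd := hδpos m
    rw [hAn m n]
    have heq : ENNReal.ofReal ((2 * δ m * (Real.sqrt (2 * π))⁻¹) ^ k
        * Real.exp (-(θ m) * Real.log n))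
        = ∏ j : Fin k, ENNReal.ofReal ((2 * δ m * (Real.sqrt (2 * π))⁻¹)
            * Real.exp (-(((1 - ε m) * |v j| + δ m) ^ 2) * Real.log n)) := by
      rw [← ENNReal.ofReal_prod_of_nonneg (fun j _ => by positivity)]
      congr 1
      rw [Finset.prod_mul_distrib, Finset.prod_const, Finset.card_univ, Fintype.card_fin,
        ← Real.exp_sum]
      congr 1
      rw [hθdef, neg_mul, Finset.sum_mul, ← Finset.sum_neg_distrib]
      simp only [neg_mul]
    rw [heq]
    exact Finset.prod_le_prod' fun j _ => hsingle m n hn j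
  -- divergence
  have hsum : ∀ m, (∑' n, P (A m n)) = ⊤ := by
    intro m
    have hd := hδpos m
    set C := (2 * δ m * (Real.sqrt (2 * π))⁻¹) ^ k with hC
    have hCpos : (0:ℝ) < C := by
      rw [hC]
      have : (0:ℝ) < Real.sqrt (2 * π) := Real.sqrt_pos.2 (by positivity)
      positivity
    by_contra hfin
    set g : ℕ → ℝ := fun n => if 2 ≤ n then C * (n:ℝ) ^ (-(θ m)) else 0 with hg
    have hg0 : ∀ n, 0 ≤ g n := by
      intro n
      rw [hg]; dsimp only
      split
      · positivity
      · exact le_refl 0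
    have hle : ∀ n, ENNReal.ofReal (g n) ≤ P (A m n) := by
      intro n
      by_cases hn : 2 ≤ n
      · rw [hg]; dsimp only; rw [if_pos hn]
        refine le_trans (le_of_eq ?_) (hAlow m n hn)
        congr 1
        have hn0 : (0:ℝ) < (n:ℝ) := by
          have : (2:ℝ) ≤ (n:ℝ) := by exact_mod_cast hn
          linarith
        rw [Real.rpow_def_of_pos hn0]
        rw [hC]; ring_nf
      · rw [hg]; dsimp only; rw [if_neg hn]
        simp
    have hsum_le := ENNReal.tsum_le_tsum hle
    have hfin2 : (∑' n, ENNReal.ofReal (g n)) ≠ ⊤ := by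
      intro htop
      exact hfin (top_le_iff.1 (htop ▸ hsum_le))
    have hsg : Summable g := by
      have h := ENNReal.summable_toReal hfin2
      exact h.congr fun n => ENNReal.toReal_ofReal (hg0 n)
    have h2 : Summable (fun n : ℕ => C * ((n + 2 : ℕ):ℝ) ^ (-(θ m))) := by
      have h := (summable_nat_add_iff 2).2 hsg
      exact h.congr fun n => by rw [hg]; dsimp only; rw [if_pos (by omega)]
    have h3 : Summable (fun n : ℕ => ((n + 2 : ℕ):ℝ) ^ (-(θ m))) := by
      have h := h2.mul_left C⁻¹
      refine h.congr fun n => ?_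
      field_simp
    have h4 : Summable (fun n : ℕ => (n:ℝ) ^ (-(θ m))) :=
      (summable_nat_add_iff 2).1 h3
    rw [Real.summable_nat_rpow] at h4
    linarith [hθlt m]
  have hlim : ∀ m, P (limsup (fun n => A m n) atTop) = 1 := fun m =>
    measure_limsup_eq_one (hAmeas m) (hIndep m) (hsum m)
  have hae : ∀ᵐ ω ∂P, ∀ m, ω ∈ limsup (fun n => A m n) atTop := by
    rw [ae_all_iff]
    intro m
    have hms : MeasurableSet (limsup (fun n => A m n) atTop) :=
      MeasurableSet.measurableSet_limsup (hAmeas m)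
    have : P ((limsup (fun n => A m n) atTop)ᶜ) = 0 := by
      rw [measure_compl hms (measure_ne_top P _), hlim m, measure_univ]
      simp
    exact this
  filter_upwards [hae] with ω hω
  have hfreq : ∀ m (b : ℕ), ∃ n, b ≤ n ∧ ω ∈ A m n := by
    intro m b
    have := (mem_limsup_iff_frequently_mem).1 (hω m)
    obtain ⟨n, hn, h⟩ := (frequently_atTop.1 this) b
    exact ⟨n, hn, h⟩
  choose F hF1 hF2 using hfreq
  let s : ℕ → ℕ := fun m => Nat.rec (F 0 2) (fun m prev => F (m+1) (prev+1)) m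
  have hs0 : s 0 = F 0 2 := rfl
  have hss : ∀ m, s (m+1) = F (m+1) (s m + 1) := fun m => rfl
  have hmono : StrictMono s := strictMono_nat_of_lt_succ fun m => by
    rw [hss]; exact Nat.lt_of_lt_of_le (Nat.lt_succ_self _) (hF1 _ _)
  have hs2 : ∀ m, 2 ≤ s m := by
    intro m
    induction m with
    | zero => rw [hs0]; exact hF1 0 2
    | succ m ih => rw [hss]; exact le_trans (le_trans ih (Nat.le_succ _)) (hF1 _ _)
  have hsA : ∀ m, ω ∈ A m (s m) := by
    intro m
    cases m with
    | zero => rw [hs0]; exact hF2 0 2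
    | succ m => rw [hss]; exact hF2 _ _
  refine ⟨s, hmono, fun j => ?_⟩
  have hbound : ∀ m : ℕ, dist (η j (s m) ω / Real.sqrt (2 * Real.log (Nat.cast (s m) : ℝ))) (v j) ≤ 2 * ε m := by
    intro m
    have h2 := hs2 m
    have hA := hsA m
    have he := hεpos m
    have hd := hδpos m
    have hd2 := hδle m
    have h1 := hvj j
    have hj : η j (s m) ω ∈ I m j (s m) := by
      rw [hAdef] at hA
      exact Set.mem_iInter.1 hA j
    simp only [hIdef, Set.mem_Icc] at hj
    obtain ⟨hx1, hx2⟩ := hj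
    set R := Real.sqrt (2 * Real.log (Nat.cast (s m) : ℝ)) with hR
    set x := η j (s m) ω with hx
    have hn2 : (2:ℝ) ≤ (Nat.cast (s m) : ℝ) := by exact_mod_cast h2
    have hlog : (1:ℝ)/2 ≤ Real.log (Nat.cast (s m) : ℝ) := by
      have hl : Real.log 2 ≤ Real.log (Nat.cast (s m) : ℝ) := Real.log_le_log (by norm_num) hn2
      nlinarith [Real.log_two_gt_d9]
    have hR1 : 1 ≤ R := by rw [hR, Real.one_le_sqrt]; linarith
    have hR0 : (0:ℝ) < R := lt_of_lt_of_le one_pos hR1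
    have hdiv1 : (1 - ε m) * v j - δ m ≤ x / R := (le_div_iff₀ hR0).2 hx1
    have hdiv2 : x / R ≤ (1 - ε m) * v j + δ m := (div_le_iff₀ hR0).2 hx2
    rw [Real.dist_eq, abs_le]
    constructor
    · nlinarith [mul_nonneg he.le (by linarith [le_abs_self (v j)] : (0:ℝ) ≤ |v j| - v j),
        mul_le_mul_of_nonneg_left h1 he.le]
    · nlinarith [mul_nonneg he.le (by linarith [neg_abs_le (v j)] : (0:ℝ) ≤ v j + |v j|),
        mul_le_mul_of_nonneg_left h1 he.le]
  rw [tendsto_iff_dist_tendsto_zero]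
  apply squeeze_zero (fun m => dist_nonneg) hbound
  have h4 : Tendsto (fun m : ℕ => (2:ℝ) / (m + 4 : ℕ)) atTop (nhds 0) :=
    (tendsto_const_div_atTop_nhds_zero_nat 2).comp (tendsto_add_atTop_nat 4)
  have : (fun m : ℕ => 2 * ε m) = fun m : ℕ => (2:ℝ) / (m + 4 : ℕ) := by
    funext m; rw [hεdef]; push_cast; ring
  rw [this]
  exact h4
end

section
/- Let u^α be defined on T = {0} ∪ {1/n : n ≥ 2} by u^α(0,0) = (α + α Σ_{j≥2} (s_j/(α+r_j))(q_j/r_j))^{-1}, u^α(1/i,0) = u^α(0,0) r_i/(α+r_i), u^α(0,1/j) = u^α(0,0)(s_j/(α+r_j))(q_j/r_j), u^α(1/i,1/j) = δ_{ij}/(α+r_j) + u^α(0,0)(r_i/(α+r_i))(s_j/(α+r_j))(q_j/r_j), where q_j, r_j, s_j > 0 satisfy Σ q_j/r_j < ∞, q_j → ∞, s_j < r_j. Then for every x ∈ T, Σ_{y∈T} u^α(x,y) = 1/α. -/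
open Filter

/-- The α-potential kernel of the (killed) Kolmogorov–Reuter chain.
The state space `T = {0} ∪ {1/n : n ≥ 2}` is modelled by `Option ℕ`, where
`none` is the state `0` and `some j` is the state `1/(j+2)`; `q j`, `r j`, `s j`
stand for `q_{j+2}`, `r_{j+2}`, `s_{j+2}`. -/
noncomputable def kernelU (q r s : ℕ → ℝ) (α : ℝ) : Option ℕ → Option ℕ → ℝ
  | none, none => (α + α * ∑' j : ℕ, (s j / (α + r j)) * (q j / r j))⁻¹
  | some i, none =>
      (α + α * ∑' j : ℕ, (s j / (α + r j)) * (q j / r j))⁻¹ * (r i / (α + r i))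
  | none, some j =>
      (α + α * ∑' j' : ℕ, (s j' / (α + r j')) * (q j' / r j'))⁻¹ *
        ((s j / (α + r j)) * (q j / r j))
  | some i, some j =>
      (if i = j then (α + r j)⁻¹ else 0) +
        (α + α * ∑' j' : ℕ, (s j' / (α + r j')) * (q j' / r j'))⁻¹ *
          (r i / (α + r i)) * ((s j / (α + r j)) * (q j / r j))

/-- For every state `x`, `Σ_{y∈T} u^α(x,y) = 1/α`. -/
theorem kernelU_row_sum (q r s : ℕ → ℝ)
    (hq : ∀ j, 0 < q j) (hr : ∀ j, 0 < r j) (hs : ∀ j, 0 < s j)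
    (hsr : ∀ j, s j < r j)
    (hsum : Summable fun j : ℕ => q j / r j)
    (hqlim : Tendsto q atTop atTop)
    (α : ℝ) (hα : 0 < α) :
    ∀ x : Option ℕ,
      kernelU q r s α x none + (∑' j : ℕ, kernelU q r s α x (some j)) = 1 / α := by
  have hαr : ∀ j, 0 < α + r j := fun j => add_pos hα (hr j)
  set t : ℕ → ℝ := fun j => (s j / (α + r j)) * (q j / r j) with ht
  have htnn : ∀ j, 0 ≤ t j := fun j => by
    have := (hq j).le; have := (hr j).le; have := (hs j).le; have := (hαr j).le
    positivity
  have htsum : Summable t := by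
    refine Summable.of_nonneg_of_le htnn (fun j => ?_) hsum
    have h1 : s j / (α + r j) ≤ 1 := by
      rw [div_le_one (hαr j)]
      linarith [(hsr j), hα]
    calc t j ≤ 1 * (q j / r j) := by
          exact mul_le_mul_of_nonneg_right h1 (div_nonneg (hq j).le (hr j).le)
      _ = q j / r j := one_mul _
  set S : ℝ := ∑' j, t j with hS
  have hSnn : 0 ≤ S := tsum_nonneg htnn
  have hpos : 0 < α * (1 + S) := by positivity
  have hCS : α + α * S = α * (1 + S) := by ring
  intro x
  match x with
  | none =>
      simp only [kernelU, ← ht, ← hS, tsum_mul_left]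
      rw [hCS]
      field_simp
  | some i =>
      simp only [kernelU, ← ht, ← hS]
      have hδ : ∀ j : ℕ, (if i = j then (α + r j)⁻¹ else 0)
          = if j = i then (α + r i)⁻¹ else 0 := by
        intro j
        by_cases h : i = j
        · subst h; simp
        · simp [h, Ne.symm h]
      have hδsum : Summable (fun j : ℕ => if i = j then (α + r j)⁻¹ else 0) := by
        simp only [hδ]
        exact (hasSum_ite_eq i ((α + r i)⁻¹)).summable
      have h2sum : Summable (fun j : ℕ =>
          (α + α * S)⁻¹ * (r i / (α + r i)) * t j) := htsum.mul_left _
      rw [Summable.tsum_add hδsum h2sum, tsum_mul_left]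
      have hδtsum : (∑' j : ℕ, if i = j then (α + r j)⁻¹ else 0) = (α + r i)⁻¹ := by
        simp only [hδ]
        exact tsum_ite_eq i _
      rw [hδtsum, hCS, ← hS]
      have hne1 : α * (1 + S) ≠ 0 := hpos.ne'
      have hne2 : α + r i ≠ 0 := (hαr i).ne'
      field_simp
      ring
end

section
/- With u^α defined as in the Kolmogorov-type example (u^α(0,0) = (α + α Σ_{j≥2} (s_j/(α+r_j))(q_j/r_j))^{-1}, etc.), the resolvent equation holds: for all α, β > 0 and all x, y ∈ T, u^α(x,y) − u^β(x,y) = (β − α) Σ_{z∈T} u^α(x,z) u^β(z,y). -/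
open Filter

set_option maxHeartbeats 1000000

private lemma summable_A (q r s : ℕ → ℝ) (hq : ∀ j, 0 < q j) (hr : ∀ j, 0 < r j)
    (hs : ∀ j, 0 < s j) (hsr : ∀ j, s j < r j)
    (hsum : Summable fun j : ℕ => q j / r j) {γ : ℝ} (hγ : 0 < γ) :
    Summable fun j : ℕ => s j / (γ + r j) * (q j / r j) := by
  refine Summable.of_nonneg_of_le (fun j => ?_) (fun j => ?_) hsum
  · have h1 := hq j; have h2 := hr j; have h3 := hs j
    have h4 : 0 < γ + r j := add_pos hγ (hr j)
    positivity
  · refine mul_le_of_le_one_left (by have := hq j; have := hr j; positivity) ?_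
    rw [div_le_one (add_pos hγ (hr j))]
    exact (hsr j).le.trans (le_add_of_nonneg_left hγ.le)

/-- Resolvent equation: for all `α, β > 0` and all states `x, y`,
`u^α(x,y) − u^β(x,y) = (β − α) Σ_{z∈T} u^α(x,z) u^β(z,y)`. -/
theorem kernelU_resolvent (q r s : ℕ → ℝ)
    (hq : ∀ j, 0 < q j) (hr : ∀ j, 0 < r j) (hs : ∀ j, 0 < s j)
    (hsr : ∀ j, s j < r j)
    (hsum : Summable fun j : ℕ => q j / r j)
    (hqlim : Tendsto q atTop atTop)
    (α β : ℝ) (hα : 0 < α) (hβ : 0 < β) :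
    ∀ x y : Option ℕ,
      kernelU q r s α x y - kernelU q r s β x y
        = (β - α) * (kernelU q r s α x none * kernelU q r s β none y
            + ∑' z : ℕ, kernelU q r s α x (some z) * kernelU q r s β (some z) y) := by
  have hrα : ∀ j, (0:ℝ) < α + r j := fun j => add_pos hα (hr j)
  have hrβ : ∀ j, (0:ℝ) < β + r j := fun j => add_pos hβ (hr j)
  have hSumα := summable_A q r s hq hr hs hsr hsum hα
  have hSumβ := summable_A q r s hq hr hs hsr hsum hβ
  -- summability of the cross product
  have hSumAF : Summable fun j : ℕ => s j / (α + r j) * (q j / r j) * (r j / (β + r j)) := by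
    refine Summable.of_nonneg_of_le (fun j => ?_) (fun j => ?_) hSumα
    · have h1 := hq j; have h2 := hr j; have h3 := hs j
      have h4 := hrα j; have h5 := hrβ j
      positivity
    · refine mul_le_of_le_one_right ?_ ?_
      · have h1 := hq j; have h2 := hr j; have h3 := hs j; have h4 := hrα j
        positivity
      · rw [div_le_one (hrβ j)]; linarith [hr j]
  -- positivity of the denominators
  have hSαnn : 0 ≤ ∑' j : ℕ, s j / (α + r j) * (q j / r j) :=
    tsum_nonneg fun j => by
      have h1 := hq j; have h2 := hr j; have h3 := hs j; have h4 := hrα j; positivity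
  have hSβnn : 0 ≤ ∑' j : ℕ, s j / (β + r j) * (q j / r j) :=
    tsum_nonneg fun j => by
      have h1 := hq j; have h2 := hr j; have h3 := hs j; have h4 := hrβ j; positivity
  have hDα : (0:ℝ) < α + α * ∑' j : ℕ, s j / (α + r j) * (q j / r j) := by nlinarith
  have hDβ : (0:ℝ) < β + β * ∑' j : ℕ, s j / (β + r j) * (q j / r j) := by nlinarith
  -- the key tsum identity
  have hkey : β * (∑' j : ℕ, s j / (β + r j) * (q j / r j))
      - α * (∑' j : ℕ, s j / (α + r j) * (q j / r j))
      = (β - α) * ∑' j : ℕ, s j / (α + r j) * (q j / r j) * (r j / (β + r j)) := by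
    calc β * (∑' j : ℕ, s j / (β + r j) * (q j / r j))
          - α * (∑' j : ℕ, s j / (α + r j) * (q j / r j))
        = (∑' j : ℕ, β * (s j / (β + r j) * (q j / r j)))
          - ∑' j : ℕ, α * (s j / (α + r j) * (q j / r j)) := by
          rw [tsum_mul_left, tsum_mul_left]
      _ = ∑' j : ℕ, (β * (s j / (β + r j) * (q j / r j))
            - α * (s j / (α + r j) * (q j / r j))) :=
          (Summable.tsum_sub (hSumβ.mul_left β) (hSumα.mul_left α)).symm
      _ = ∑' j : ℕ, (β - α) * (s j / (α + r j) * (q j / r j) * (r j / (β + r j))) := by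
          refine tsum_congr fun j => ?_
          have h1 := (hrα j).ne'
          have h2 := (hrβ j).ne'
          have h3 := (hr j).ne'
          field_simp
          ring
      _ = (β - α) * ∑' j : ℕ, s j / (α + r j) * (q j / r j) * (r j / (β + r j)) :=
          tsum_mul_left
  -- scalar resolvent identities
  have E1 : (α + α * ∑' j : ℕ, s j / (α + r j) * (q j / r j))⁻¹
      - (β + β * ∑' j : ℕ, s j / (β + r j) * (q j / r j))⁻¹
      = (β - α) * ((α + α * ∑' j : ℕ, s j / (α + r j) * (q j / r j))⁻¹
          * (β + β * ∑' j : ℕ, s j / (β + r j) * (q j / r j))⁻¹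
          * (1 + ∑' j : ℕ, s j / (α + r j) * (q j / r j) * (r j / (β + r j)))) := by
    have h2 : (β + β * ∑' j : ℕ, s j / (β + r j) * (q j / r j))
        - (α + α * ∑' j : ℕ, s j / (α + r j) * (q j / r j))
        = (β - α) * (1 + ∑' j : ℕ, s j / (α + r j) * (q j / r j) * (r j / (β + r j))) := by
      linear_combination hkey
    rw [inv_sub_inv hDα.ne' hDβ.ne', h2]
    field_simp
  have E2 : ∀ i, r i / (α + r i) - r i / (β + r i)
      = (β - α) * ((α + r i)⁻¹ * (r i / (β + r i))) := fun i => by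
    have h1 := (hrα i).ne'; have h2 := (hrβ i).ne'
    field_simp
    ring
  have E3 : ∀ j, s j / (α + r j) * (q j / r j) - s j / (β + r j) * (q j / r j)
      = (β - α) * ((β + r j)⁻¹ * (s j / (α + r j) * (q j / r j))) := fun j => by
    have h1 := (hrα j).ne'; have h2 := (hrβ j).ne'; have h3 := (hr j).ne'
    field_simp
    ring
  have E4 : ∀ j, (α + r j)⁻¹ - (β + r j)⁻¹
      = (β - α) * ((α + r j)⁻¹ * (β + r j)⁻¹) := fun j => by
    have h1 := (hrα j).ne'; have h2 := (hrβ j).ne'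
    field_simp
    ring
  rintro (_ | i) (_ | j) <;> simp only [kernelU]
  · -- none, none
    have ht : (∑' z : ℕ, (α + α * ∑' j : ℕ, s j / (α + r j) * (q j / r j))⁻¹
          * (s z / (α + r z) * (q z / r z))
          * ((β + β * ∑' j : ℕ, s j / (β + r j) * (q j / r j))⁻¹ * (r z / (β + r z))))
        = (α + α * ∑' j : ℕ, s j / (α + r j) * (q j / r j))⁻¹
          * (β + β * ∑' j : ℕ, s j / (β + r j) * (q j / r j))⁻¹
          * ∑' j : ℕ, s j / (α + r j) * (q j / r j) * (r j / (β + r j)) := by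
      calc (∑' z : ℕ, (α + α * ∑' j : ℕ, s j / (α + r j) * (q j / r j))⁻¹
            * (s z / (α + r z) * (q z / r z))
            * ((β + β * ∑' j : ℕ, s j / (β + r j) * (q j / r j))⁻¹ * (r z / (β + r z))))
          = ∑' z : ℕ, ((α + α * ∑' j : ℕ, s j / (α + r j) * (q j / r j))⁻¹
              * (β + β * ∑' j : ℕ, s j / (β + r j) * (q j / r j))⁻¹)
              * (s z / (α + r z) * (q z / r z) * (r z / (β + r z))) :=
            tsum_congr fun z => by ring
        _ = _ := tsum_mul_left
    rw [ht]
    linear_combination E1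
  · -- none, some j
    have ht : (∑' z : ℕ, (α + α * ∑' j : ℕ, s j / (α + r j) * (q j / r j))⁻¹
          * (s z / (α + r z) * (q z / r z))
          * ((if z = j then (β + r j)⁻¹ else 0)
            + (β + β * ∑' j : ℕ, s j / (β + r j) * (q j / r j))⁻¹
              * (r z / (β + r z)) * (s j / (β + r j) * (q j / r j))))
        = (α + α * ∑' j : ℕ, s j / (α + r j) * (q j / r j))⁻¹
            * (s j / (α + r j) * (q j / r j)) * (β + r j)⁻¹
          + (α + α * ∑' j : ℕ, s j / (α + r j) * (q j / r j))⁻¹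
            * (β + β * ∑' j : ℕ, s j / (β + r j) * (q j / r j))⁻¹
            * (s j / (β + r j) * (q j / r j))
            * ∑' j : ℕ, s j / (α + r j) * (q j / r j) * (r j / (β + r j)) := by
      have hfun : (fun z : ℕ => (α + α * ∑' j : ℕ, s j / (α + r j) * (q j / r j))⁻¹
          * (s z / (α + r z) * (q z / r z))
          * ((if z = j then (β + r j)⁻¹ else 0)
            + (β + β * ∑' j : ℕ, s j / (β + r j) * (q j / r j))⁻¹
              * (r z / (β + r z)) * (s j / (β + r j) * (q j / r j))))
          = fun z : ℕ => (if z = j then (α + α * ∑' j : ℕ, s j / (α + r j) * (q j / r j))⁻¹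
              * (s j / (α + r j) * (q j / r j)) * (β + r j)⁻¹ else 0)
            + ((α + α * ∑' j : ℕ, s j / (α + r j) * (q j / r j))⁻¹
                * (β + β * ∑' j : ℕ, s j / (β + r j) * (q j / r j))⁻¹
                * (s j / (β + r j) * (q j / r j)))
              * (s z / (α + r z) * (q z / r z) * (r z / (β + r z))) := by
        funext z
        rcases eq_or_ne z j with h | h
        · subst h; simp only [if_pos rfl, eq_self_iff_true, if_true]; ring
        · simp only [if_neg h]; ring
      rw [hfun, Summable.tsum_add ((hasSum_ite_eq j _).summable) (hSumAF.mul_left _),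
        tsum_ite_eq, tsum_mul_left]
    rw [ht]
    linear_combination (s j / (β + r j) * (q j / r j)) * E1
      + (α + α * ∑' j : ℕ, s j / (α + r j) * (q j / r j))⁻¹ * E3 j
  · -- some i, none
    have ht : (∑' z : ℕ, ((if i = z then (α + r z)⁻¹ else 0)
          + (α + α * ∑' j : ℕ, s j / (α + r j) * (q j / r j))⁻¹
            * (r i / (α + r i)) * (s z / (α + r z) * (q z / r z)))
          * ((β + β * ∑' j : ℕ, s j / (β + r j) * (q j / r j))⁻¹ * (r z / (β + r z))))
        = (α + r i)⁻¹ * ((β + β * ∑' j : ℕ, s j / (β + r j) * (q j / r j))⁻¹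
            * (r i / (β + r i)))
          + (α + α * ∑' j : ℕ, s j / (α + r j) * (q j / r j))⁻¹
            * (r i / (α + r i))
            * (β + β * ∑' j : ℕ, s j / (β + r j) * (q j / r j))⁻¹
            * ∑' j : ℕ, s j / (α + r j) * (q j / r j) * (r j / (β + r j)) := by
      have hfun : (fun z : ℕ => ((if i = z then (α + r z)⁻¹ else 0)
          + (α + α * ∑' j : ℕ, s j / (α + r j) * (q j / r j))⁻¹
            * (r i / (α + r i)) * (s z / (α + r z) * (q z / r z)))
          * ((β + β * ∑' j : ℕ, s j / (β + r j) * (q j / r j))⁻¹ * (r z / (β + r z))))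
          = fun z : ℕ => (if z = i then (α + r i)⁻¹
              * ((β + β * ∑' j : ℕ, s j / (β + r j) * (q j / r j))⁻¹
                * (r i / (β + r i))) else 0)
            + ((α + α * ∑' j : ℕ, s j / (α + r j) * (q j / r j))⁻¹
                * (r i / (α + r i))
                * (β + β * ∑' j : ℕ, s j / (β + r j) * (q j / r j))⁻¹)
              * (s z / (α + r z) * (q z / r z) * (r z / (β + r z))) := by
        funext z
        rcases eq_or_ne z i with h | h
        · subst h; simp only [if_pos rfl, eq_self_iff_true, if_true]; ring
        · simp only [if_neg (Ne.symm h), if_neg h]; ring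
      rw [hfun, Summable.tsum_add ((hasSum_ite_eq i _).summable) (hSumAF.mul_left _),
        tsum_ite_eq, tsum_mul_left]
    rw [ht]
    linear_combination (r i / (α + r i)) * E1
      + (β + β * ∑' j : ℕ, s j / (β + r j) * (q j / r j))⁻¹ * E2 i
  · -- some i, some j
    have ht : (∑' z : ℕ, ((if i = z then (α + r z)⁻¹ else 0)
          + (α + α * ∑' j : ℕ, s j / (α + r j) * (q j / r j))⁻¹
            * (r i / (α + r i)) * (s z / (α + r z) * (q z / r z)))
          * ((if z = j then (β + r j)⁻¹ else 0)
            + (β + β * ∑' j : ℕ, s j / (β + r j) * (q j / r j))⁻¹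
              * (r z / (β + r z)) * (s j / (β + r j) * (q j / r j))))
        = (α + r i)⁻¹ * ((if i = j then (β + r j)⁻¹ else 0)
            + (β + β * ∑' j : ℕ, s j / (β + r j) * (q j / r j))⁻¹
              * (r i / (β + r i)) * (s j / (β + r j) * (q j / r j)))
          + (α + α * ∑' j : ℕ, s j / (α + r j) * (q j / r j))⁻¹
            * (r i / (α + r i)) * (s j / (α + r j) * (q j / r j)) * (β + r j)⁻¹
          + (α + α * ∑' j : ℕ, s j / (α + r j) * (q j / r j))⁻¹
            * (r i / (α + r i))
            * (β + β * ∑' j : ℕ, s j / (β + r j) * (q j / r j))⁻¹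
            * (s j / (β + r j) * (q j / r j))
            * ∑' j : ℕ, s j / (α + r j) * (q j / r j) * (r j / (β + r j)) := by
      have hfun : (fun z : ℕ => ((if i = z then (α + r z)⁻¹ else 0)
          + (α + α * ∑' j : ℕ, s j / (α + r j) * (q j / r j))⁻¹
            * (r i / (α + r i)) * (s z / (α + r z) * (q z / r z)))
          * ((if z = j then (β + r j)⁻¹ else 0)
            + (β + β * ∑' j : ℕ, s j / (β + r j) * (q j / r j))⁻¹
              * (r z / (β + r z)) * (s j / (β + r j) * (q j / r j))))
          = fun z : ℕ => ((if z = i then (α + r i)⁻¹ * ((if i = j then (β + r j)⁻¹ else 0)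
              + (β + β * ∑' j : ℕ, s j / (β + r j) * (q j / r j))⁻¹
                * (r i / (β + r i)) * (s j / (β + r j) * (q j / r j))) else 0)
            + (if z = j then (α + α * ∑' j : ℕ, s j / (α + r j) * (q j / r j))⁻¹
                * (r i / (α + r i)) * (s j / (α + r j) * (q j / r j)) * (β + r j)⁻¹ else 0))
            + ((α + α * ∑' j : ℕ, s j / (α + r j) * (q j / r j))⁻¹
                * (r i / (α + r i))
                * (β + β * ∑' j : ℕ, s j / (β + r j) * (q j / r j))⁻¹
                * (s j / (β + r j) * (q j / r j)))
              * (s z / (α + r z) * (q z / r z) * (r z / (β + r z))) := by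
        funext z
        rcases eq_or_ne z i with h1 | h1 <;> rcases eq_or_ne z j with h2 | h2
        · subst h1; subst h2
          simp only [if_pos rfl, eq_self_iff_true, if_true]
          ring
        · subst h1
          simp only [if_pos rfl, if_neg h2, eq_self_iff_true, if_true]
          ring
        · subst h2
          simp only [if_pos rfl, if_neg h1, if_neg (Ne.symm h1), eq_self_iff_true, if_true]
          ring
        · simp only [if_neg h1, if_neg h2, if_neg (Ne.symm h1)]
          ring
      rw [hfun, Summable.tsum_add (((hasSum_ite_eq i _).summable).add
          ((hasSum_ite_eq j _).summable)) (hSumAF.mul_left _),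
        Summable.tsum_add ((hasSum_ite_eq i _).summable) ((hasSum_ite_eq j _).summable),
        tsum_ite_eq, tsum_ite_eq, tsum_mul_left]
    rw [ht]
    by_cases hij : i = j
    · subst hij
      simp only [if_pos rfl, eq_self_iff_true, if_true]
      linear_combination (r i / (α + r i)) * (s i / (β + r i) * (q i / r i)) * E1
        + (β + β * ∑' j : ℕ, s j / (β + r j) * (q j / r j))⁻¹
          * (s i / (β + r i) * (q i / r i)) * E2 i
        + (α + α * ∑' j : ℕ, s j / (α + r j) * (q j / r j))⁻¹
          * (r i / (α + r i)) * E3 i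
        + E4 i
    · simp only [if_neg hij]
      linear_combination (r i / (α + r i)) * (s j / (β + r j) * (q j / r j)) * E1
        + (β + β * ∑' j : ℕ, s j / (β + r j) * (q j / r j))⁻¹
          * (s j / (β + r j) * (q j / r j)) * E2 i
        + (α + α * ∑' j : ℕ, s j / (α + r j) * (q j / r j))⁻¹
          * (r i / (α + r i)) * E3 j
end

section
/- Suppose the g_j for j ≥ 2 are pairwise distinct, 0 < g_j < 1. Then for any three indices i_1 < i_2 < i_3, the identity (1+f_{i_1}g_{i_2})(1+f_{i_2}g_{i_3})(1+f_{i_3}g_{i_1}) = (1+f_{i_1}g_{i_3})(1+f_{i_2}g_{i_1})(1+f_{i_3}g_{i_2}) cannot hold for all values of (f_{i_1}, f_{i_2}, f_{i_3}) in any nonempty open subset of (0,1)^3; indeed, differentiating the identity in f_{i_1} and f_{i_2} forces g_{i_1} = g_{i_2}. -/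
/-- If `g₁, g₂, g₃ ∈ (0,1)` are pairwise distinct, then the identity
`(1+f₁g₂)(1+f₂g₃)(1+f₃g₁) = (1+f₁g₃)(1+f₂g₁)(1+f₃g₂)` cannot hold for all
`(f₁,f₂,f₃)` in any nonempty open subset of `(0,1)³`. -/
theorem not_symmetrizable_identity (g₁ g₂ g₃ : ℝ)
    (hg₁ : g₁ ∈ Set.Ioo (0 : ℝ) 1) (hg₂ : g₂ ∈ Set.Ioo (0 : ℝ) 1)
    (hg₃ : g₃ ∈ Set.Ioo (0 : ℝ) 1)
    (h12 : g₁ ≠ g₂) (h13 : g₁ ≠ g₃) (h23 : g₂ ≠ g₃) :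
    ∀ U : Set (ℝ × ℝ × ℝ), IsOpen U → U.Nonempty →
      U ⊆ Set.Ioo (0 : ℝ) 1 ×ˢ (Set.Ioo (0 : ℝ) 1 ×ˢ Set.Ioo (0 : ℝ) 1) →
      ¬ (∀ p ∈ U,
        (1 + p.1 * g₂) * (1 + p.2.1 * g₃) * (1 + p.2.2 * g₁)
          = (1 + p.1 * g₃) * (1 + p.2.1 * g₁) * (1 + p.2.2 * g₂)) := by
  intro U hU hne hsub h
  obtain ⟨⟨a, b, c⟩, hp⟩ := hne
  obtain ⟨ε, hε, hball⟩ := Metric.isOpen_iff.mp hU _ hp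
  have hε2 : (0 : ℝ) < ε / 2 := by linarith
  have hmem : ∀ s t : ℝ, |s| < ε → |t| < ε → ((a + s, b + t, c) : ℝ × ℝ × ℝ) ∈ U := by
    intro s t hs ht
    apply hball
    simp only [Metric.mem_ball, Prod.dist_eq, Real.dist_eq]
    have : a + s - a = s := by ring
    have : b + t - b = t := by ring
    simp only [max_lt_iff]
    refine ⟨by simpa using hs, by simpa using ht, by simpa using hε⟩
  have e1 := h _ (hmem 0 0 (by simpa using hε) (by simpa using hε))
  have e2 := h _ (hmem (ε/2) 0 (by rw [abs_of_pos hε2]; linarith) (by simpa using hε))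
  have e3 := h _ (hmem 0 (ε/2) (by simpa using hε) (by rw [abs_of_pos hε2]; linarith))
  have e4 := h _ (hmem (ε/2) (ε/2) (by rw [abs_of_pos hε2]; linarith)
    (by rw [abs_of_pos hε2]; linarith))
  simp only at e1 e2 e3 e4
  have key : (ε/2) * (ε/2) * g₃ * (g₂ - g₁) = 0 := by linear_combination e4 - e2 - e3 + e1
  have hg₃0 : g₃ ≠ 0 := ne_of_gt hg₃.1
  have : g₂ - g₁ ≠ 0 := sub_ne_zero.mpr (Ne.symm h12)
  have := mul_ne_zero (mul_ne_zero (mul_ne_zero (ne_of_gt hε2) (ne_of_gt hε2)) hg₃0) this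
  exact this key
end
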